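/- arXiv:2504.15064 — 3 statements merged into one kernel-verified Lean document; each statement's English description precedes it below -/
import Mathlib

section
/- Let D be a 2×2 complex matrix. The linear map x ↦ D·x on ℂ² is a derivation of the 2-dimensional Mock-Lie algebra A_{1,2} if and only if D_{01} = 0 and D_{11} = 2·D_{00} (indices 0-based, D_{ij} denoting the entry in row i, column j). Equivalently, the derivations of A_{1,2} are exactly the linear maps whose matrix relative to the basis (e_1, e_2) has the form [[a, 0], [b, 2a]] for a, b ∈ ℂ. -/
/-- The product of the 2-dimensional Mock-Lie algebra `A_{1,2}`:
`e_1 · e_1 = e_2`, all other products of basis vectors zero. -/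
def mulA12 (x y : Fin 2 → ℂ) : Fin 2 → ℂ := ![0, x 0 * y 0]

open Matrix

lemma mulA12_eq_smul_single (x y : Fin 2 → ℂ) : mulA12 x y = (x 0 * y 0) • Pi.single 1 1 := by
  ext i
  fin_cases i <;> simp [mulA12]

lemma mulA12_single_zero : mulA12 (Pi.single 0 1) (Pi.single 0 1) = Pi.single 1 1 := by
  simp [mulA12_eq_smul_single]

lemma mulVec_apply_zero_of_apply_zero_one {R : Type*} [NonUnitalNonAssocSemiring R]
    {D : Matrix (Fin 2) (Fin 2) R} (h : D 0 1 = 0) (x : Fin 2 → R) :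
    (D *ᵥ x) 0 = D 0 0 * x 0 := by
  simp [mulVec, dotProduct, Fin.sum_univ_two, h]

/-- `x ↦ D · x` is a derivation of `A_{1,2}` iff `D 0 1 = 0` and `D 1 1 = 2 * D 0 0`,
i.e. `D` has the form `[[a, 0], [b, 2a]]`. -/
theorem derivation_A12_iff (D : Matrix (Fin 2) (Fin 2) ℂ) :
    (∀ x y : Fin 2 → ℂ,
        D.mulVec (mulA12 x y) = mulA12 (D.mulVec x) y + mulA12 x (D.mulVec y)) ↔
      (D 0 1 = 0 ∧ D 1 1 = 2 * D 0 0) := by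
  constructor
  · intro hD
    -- the rule at `x = y = e₁` (where `e₁ · e₁ = e₂`) already forces both conditions
    have h := hD (Pi.single 0 1) (Pi.single 0 1)
    rw [mulA12_single_zero, mulVec_single_one, mulA12_eq_smul_single, mulA12_eq_smul_single,
      ← add_smul] at h
    have h₀₁ : D 0 1 = 0 := by simpa using congrFun h 0
    have h₁₁ : D 1 1 = D 0 0 + D 0 0 := by simpa using congrFun h 1
    exact ⟨h₀₁, by rw [h₁₁, two_mul]⟩
  · rintro ⟨h₀₁, h₁₁⟩ x y
    simp only [mulA12_eq_smul_single, mulVec_smul, mulVec_single_one,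
      mulVec_apply_zero_of_apply_zero_one h₀₁, ← add_smul]
    ext i
    fin_cases i
    · simp [h₀₁]
    · simp [h₁₁]
      ring
end

section
/- Let D be a 3×3 complex matrix (entries D_{ij}, 0-based indexing, row i and column j). The linear map x ↦ D·x on ℂ³ is a derivation of the 3-dimensional Mock-Lie algebra A_{1,2} ⊕ A_{0,1} if and only if D_{01} = 0, D_{02} = 0, D_{21} = 0, and D_{11} = 2·D_{00}. Equivalently, the derivations are exactly the linear maps whose matrix relative to the basis (e_1, e_2, e_3) has the form [[d_{11}, 0, 0], [d_{21}, 2d_{11}, d_{23}], [d_{31}, 0, d_{33}]]. -/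
/-!
Every product lies on the line spanned by `e_2` (coordinate `1`), so `D (x · y)` is `x₀ y₀` times
the column `D e_2`, whereas `D x · y + x · D y` has only an `e_2`-component. The derivation
identity therefore says that `D₀₁ = D₂₁ = 0` and `D₁₁ x₀ y₀ = (D x)₀ y₀ + x₀ (D y)₀`.
Testing the latter with `x = y = e_1` gives `D₁₁ = 2 D₀₀`, and with `x = e_3, y = e_1` gives
`D₀₂ = 0`; conversely, once `D₀₁ = D₀₂ = 0` we have `(D x)₀ = D₀₀ x₀`, and the identity holds.
-/

/-- The product of the 3-dimensional Mock-Lie algebra `A_{1,2} ⊕ A_{0,1}`: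
`e_1 · e_1 = e_2`, all other products of basis vectors zero. -/
def mulA12A01 (x y : Fin 3 → ℂ) : Fin 3 → ℂ := ![0, x 0 * y 0, 0]

open Matrix

theorem Matrix.mulVec_fin_three_apply_zero {R : Type*} [NonUnitalNonAssocSemiring R]
    (A : Matrix (Fin 3) (Fin 3) R) (x : Fin 3 → R) :
    (A *ᵥ x) 0 = A 0 0 * x 0 + A 0 1 * x 1 + A 0 2 * x 2 :=
  vec3_dotProduct _ _

theorem mulA12A01_eq_single (x y : Fin 3 → ℂ) : mulA12A01 x y = Pi.single 1 (x 0 * y 0) := by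
  ext i
  fin_cases i <;> simp [mulA12A01]

theorem mulVec_mulA12A01 (D : Matrix (Fin 3) (Fin 3) ℂ) (x y : Fin 3 → ℂ) :
    D *ᵥ mulA12A01 x y = ![D 0 1 * (x 0 * y 0), D 1 1 * (x 0 * y 0), D 2 1 * (x 0 * y 0)] := by
  rw [mulA12A01_eq_single, mulVec_single]
  ext i
  fin_cases i <;> rfl

theorem mulVec_mulA12A01_eq_iff (D : Matrix (Fin 3) (Fin 3) ℂ) (x y : Fin 3 → ℂ) :
    D *ᵥ mulA12A01 x y = mulA12A01 (D *ᵥ x) y + mulA12A01 x (D *ᵥ y) ↔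
      D 0 1 * (x 0 * y 0) = 0 ∧
        D 1 1 * (x 0 * y 0) = (D *ᵥ x) 0 * y 0 + x 0 * (D *ᵥ y) 0 ∧
          D 2 1 * (x 0 * y 0) = 0 := by
  rw [mulVec_mulA12A01]
  simp only [mulA12A01, cons_add_cons, empty_add_empty, vecCons_inj, add_zero, and_true]

/-- `x ↦ D · x` is a derivation of `A_{1,2} ⊕ A_{0,1}` iff
`D 0 1 = 0`, `D 0 2 = 0`, `D 2 1 = 0` and `D 1 1 = 2 * D 0 0`. -/
theorem derivation_A12_A01_iff (D : Matrix (Fin 3) (Fin 3) ℂ) :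
    (∀ x y : Fin 3 → ℂ,
        D.mulVec (mulA12A01 x y) = mulA12A01 (D.mulVec x) y + mulA12A01 x (D.mulVec y)) ↔
      (D 0 1 = 0 ∧ D 0 2 = 0 ∧ D 2 1 = 0 ∧ D 1 1 = 2 * D 0 0) := by
  constructor
  · intro h
    obtain ⟨h01, h11, h21⟩ := (mulVec_mulA12A01_eq_iff D ![1, 0, 0] ![1, 0, 0]).mp (h _ _)
    obtain ⟨-, h02, -⟩ := (mulVec_mulA12A01_eq_iff D ![0, 0, 1] ![1, 0, 0]).mp (h _ _)
    simp only [mulVec_fin_three_apply_zero, cons_val_zero, cons_val_one, cons_val, mul_one,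
      mul_zero, one_mul, zero_mul, add_zero, zero_add] at h01 h11 h21 h02
    exact ⟨h01, h02.symm, h21, by linear_combination h11⟩
  · rintro ⟨h01, h02, h21, h11⟩ x y
    rw [mulVec_mulA12A01_eq_iff, mulVec_fin_three_apply_zero, mulVec_fin_three_apply_zero,
      h01, h02, h21, h11]
    exact ⟨by ring, by ring, by ring⟩
end

section
/- Let D be a 4×4 complex matrix (entries D_{ij}, 0-based indexing, row i and column j). The linear map x ↦ D·x on ℂ⁴ is a derivation of the 4-dimensional Mock-Lie algebra A_{1,2} ⊕ A²_{0,1} if and only if D_{01} = D_{02} = D_{03} = 0, D_{21} = 0, D_{31} = 0, and D_{11} = 2·D_{00}. Equivalently, the derivations are exactly the linear maps whose matrix relative to the basis (e_1, e_2, e_3, e_4) has the form [[d_{11}, 0, 0, 0], [d_{21}, 2d_{11}, d_{23}, d_{24}], [d_{31}, 0, d_{33}, d_{34}], [d_{41}, 0, d_{43}, d_{44}]]. -/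
/-! The product is `x · y = φ x * φ y • v` with `φ x = x 0` and `v = e₂`. For such a rank-one
product, testing the derivation identity on `(u, u)` and `(x, u)` with `φ u = 1` shows that `d` is a
derivation iff `φ ∘ d = c • φ` and `d v = 2c • v`, where `c = φ (d u)`. For `d = D` these say that
row 0 of `D` is `D 0 0 • e₁` and column 1 is `2 D 0 0 • e₂`. -/

/-- The product of the 4-dimensional Mock-Lie algebra `A_{1,2} ⊕ A²_{0,1}`:
`e_1 · e_1 = e_2`, all other products of basis vectors zero. -/
def mulA12A01sq (x y : Fin 4 → ℂ) : Fin 4 → ℂ := ![0, x 0 * y 0, 0, 0]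

open Matrix

theorem LinearMap.derivation_rankOneProduct_iff {K V : Type*} [Field K] [AddCommGroup V]
    [Module K V] (d : V →ₗ[K] V) (φ : V →ₗ[K] K) (u v : V) (hu : φ u = 1) (hv : v ≠ 0) :
    (∀ x y, d ((φ x * φ y) • v) = (φ (d x) * φ y) • v + (φ x * φ (d y)) • v) ↔
      (∀ x, φ (d x) = φ (d u) * φ x) ∧ d v = (2 * φ (d u)) • v := by
  constructor
  · intro h
    have hdv : d v = (2 * φ (d u)) • v := by
      simpa [hu, two_mul, ← add_smul] using h u u
    refine ⟨fun x => ?_, hdv⟩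
    have hx := h x u
    rw [map_smul, hdv, hu, smul_smul, ← add_smul, ← sub_eq_zero, ← sub_smul] at hx
    linear_combination -(smul_eq_zero.mp hx).resolve_right hv
  · rintro ⟨hφd, hdv⟩ x y
    rw [map_smul, hdv, smul_smul, hφd x, hφd y, ← add_smul]
    ring_nf

theorem Matrix.mulVec_apply_eq_diag_mul_iff {n R : Type*} [Fintype n] [DecidableEq n]
    [CommSemiring R] (D : Matrix n n R) (i : n) :
    (∀ x, (D *ᵥ x) i = D i i * x i) ↔ ∀ j, j ≠ i → D i j = 0 := by
  constructor
  · intro h j hji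
    simpa [mulVec_single_one, Pi.single_apply, hji.symm] using h (Pi.single j 1)
  · intro h x
    rw [mulVec, dotProduct, Finset.sum_eq_single i (fun j _ hji => by rw [h j hji, zero_mul])
      (fun hi => absurd (Finset.mem_univ i) hi)]

theorem mulA12A01sq_eq_smul (x y : Fin 4 → ℂ) :
    mulA12A01sq x y = (x 0 * y 0) • Pi.single 1 1 := by
  ext i
  fin_cases i <;> simp [mulA12A01sq]

/-- `x ↦ D · x` is a derivation of `A_{1,2} ⊕ A²_{0,1}` iff
`D 0 1 = D 0 2 = D 0 3 = 0`, `D 2 1 = 0`, `D 3 1 = 0` and `D 1 1 = 2 * D 0 0`. -/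
theorem derivation_A12_A01sq_iff (D : Matrix (Fin 4) (Fin 4) ℂ) :
    (∀ x y : Fin 4 → ℂ,
        D.mulVec (mulA12A01sq x y) = mulA12A01sq (D.mulVec x) y + mulA12A01sq x (D.mulVec y)) ↔
      (D 0 1 = 0 ∧ D 0 2 = 0 ∧ D 0 3 = 0 ∧ D 2 1 = 0 ∧ D 3 1 = 0 ∧
        D 1 1 = 2 * D 0 0) := by
  have key := D.mulVecLin.derivation_rankOneProduct_iff (LinearMap.proj (R := ℂ) 0)
    (Pi.single 0 1) (Pi.single 1 1) (by simp) (Pi.single_ne_zero_iff.mpr one_ne_zero)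
  simp only [mulVecLin_apply, LinearMap.proj_apply, ← mulA12A01sq_eq_smul, mulVec_single_one,
    col_apply, D.mulVec_apply_eq_diag_mul_iff] at key
  rw [key, funext_iff]
  simp [Fin.forall_fin_succ]
  tauto
end
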